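/- arXiv:2511.02819 — 9 statements merged into one kernel-verified Lean document; each statement's English description precedes it below -/
import Mathlib

section
/- For a finite simple loopless digraph D and a uniformly random permutation π of its vertex set, let I be the set of vertices v such that either all out-neighbors of v appear after v in π, or all in-neighbors of v appear after v in π. Then for every permutation π, the induced subgraph D[I] contains no directed cycle. -/
open Finset
open scoped Classical

variable {V : Type*}

/-- Out-neighborhood of `v` in the digraph with arc relation `A`. -/
noncomputable def outN [Fintype V] (A : V → V → Prop) (v : V) : Finset V :=
  Finset.univ.filter (fun w => A v w)

/-- In-neighborhood of `v`. -/
noncomputable def inN [Fintype V] (A : V → V → Prop) (v : V) : Finset V :=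
  Finset.univ.filter (fun w => A w v)

/-- Neighborhood `N(v) = N⁺(v) ∪ N⁻(v)`. -/
noncomputable def nbhd [Fintype V] (A : V → V → Prop) (v : V) : Finset V :=
  outN A v ∪ inN A v

/-- `ρ_D(v) = 1/(1+d⁺) + 1/(1+d⁻) − 1/(1+d)`. -/
noncomputable def rho [Fintype V] (A : V → V → Prop) (v : V) : ℝ :=
  1 / (1 + ((outN A v).card : ℝ)) + 1 / (1 + ((inN A v).card : ℝ))
    - 1 / (1 + ((nbhd A v).card : ℝ))

/-- A vertex set `T` is acyclic if the digraph induced on `T` has no directed cycle,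
i.e. the transitive closure of the restricted arc relation has no fixed point. -/
def IsAcyclicOn (A : V → V → Prop) (T : Finset V) : Prop :=
  ∀ v : V, ¬ Relation.TransGen (fun x y => x ∈ T ∧ y ∈ T ∧ A x y) v v

/-- Output of the DL algorithm for labeling `L`: vertices with both a right
in-neighbor and a right out-neighbor. -/
noncomputable def DLout [Fintype V] (A : V → V → Prop)
    (L : V ≃ Fin (Fintype.card V)) : Finset V :=
  Finset.univ.filter (fun u =>
    (∃ w ∈ inN A u, L u < L w) ∧ (∃ w ∈ outN A u, L u < L w))

/-- For any permutation (labeling) of the vertices, the set of vertices `v` such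
that all out-neighbors of `v` come after `v`, or all in-neighbors of `v` come
after `v`, induces no directed cycle. -/
theorem stmt_1 [Fintype V] (A : V → V → Prop) (hA : Irreflexive A)
    (L : V ≃ Fin (Fintype.card V)) :
    IsAcyclicOn A (Finset.univ.filter (fun v =>
      (∀ w ∈ outN A v, L v < L w) ∨ (∀ w ∈ inN A v, L v < L w))) := by
  classical
  intro v hv
  set T : Finset V := Finset.univ.filter (fun v =>
      (∀ w ∈ outN A v, L v < L w) ∨ (∀ w ∈ inN A v, L v < L w)) with hT
  set R : V → V → Prop := fun x y => x ∈ T ∧ y ∈ T ∧ A x y with hR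
  -- the set of vertices on a cycle through v
  set C : Finset V := Finset.univ.filter
    (fun z => Relation.TransGen R v z ∧ Relation.TransGen R z v) with hC
  have hvC : v ∈ C := by simp [hC, hv]
  obtain ⟨m, hmC, hmax⟩ := C.exists_max_image L ⟨v, hvC⟩
  rw [hC, Finset.mem_filter] at hmC
  obtain ⟨-, hvm, hmv⟩ := hmC
  -- successor of m on the cycle
  obtain ⟨w, hmw, hwv⟩ : ∃ w, R m w ∧ Relation.ReflTransGen R w v :=
    (Relation.TransGen.head'_iff).mp hmv
  -- predecessor of m on the cycle
  obtain ⟨u, hvu, hum⟩ : ∃ u, Relation.ReflTransGen R v u ∧ R u m :=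
    (Relation.TransGen.tail'_iff).mp hvm
  have hwC : w ∈ C := by
    rw [hC, Finset.mem_filter]
    exact ⟨Finset.mem_univ _, hvm.tail hmw, Relation.TransGen.trans_right hwv hv⟩
  have huC : u ∈ C := by
    rw [hC, Finset.mem_filter]
    exact ⟨Finset.mem_univ _, Relation.TransGen.trans_left hv hvu,
      Relation.TransGen.head hum hmv⟩
  have hwm : L w < L m := by
    have hle := hmax w hwC
    have hne : w ≠ m := fun h => hA m (h ▸ hmw.2.2)
    exact lt_of_le_of_ne hle (fun h => hne (L.injective h))
  have hum' : L u < L m := by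
    have hle := hmax u huC
    have hne : u ≠ m := fun h => hA m (by have := hum.2.2; rwa [h] at this)
    exact lt_of_le_of_ne hle (fun h => hne (L.injective h))
  have hmT : m ∈ T := hmw.1
  rw [hT, Finset.mem_filter] at hmT
  rcases hmT.2 with h | h
  · have : L m < L w := h w (by simp [outN, hmw.2.2])
    exact absurd hwm (not_lt.mpr this.le)
  · have : L m < L u := h u (by simp [inN, hum.2.2])
    exact absurd hum' (not_lt.mpr this.le)
end

section
/- For any finite simple loopless digraph D, the maximum size of an acyclic vertex set satisfies ⍺⃗(D) ≥ Σ_{v∈V(D)} ρ_D(v), where ρ_D(v) = 1/(1+d_v⁺) + 1/(1+d_v⁻) - 1/(1+d_v). -/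
open Finset
open scoped Classical

variable {V : Type*}

/-- The "good" set for a labeling: vertices maximal in out- or in-neighborhood. -/
noncomputable def goodSet [Fintype V] (A : V → V → Prop)
    (L : V ≃ Fin (Fintype.card V)) : Finset V :=
  Finset.univ.filter (fun u =>
    (∀ w ∈ outN A u, L w ≤ L u) ∨ (∀ w ∈ inN A u, L w ≤ L u))

lemma goodSet_acyclic [Fintype V] (A : V → V → Prop) (hA : Irreflexive A)
    (L : V ≃ Fin (Fintype.card V)) : IsAcyclicOn A (goodSet A L) := by
  intro v hv
  set R := fun x y => x ∈ goodSet A L ∧ y ∈ goodSet A L ∧ A x y with hR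
  have hne : (univ.filter (fun x => Relation.TransGen R x x)).Nonempty :=
    ⟨v, by simp [hv]⟩
  obtain ⟨u, hu, hmin⟩ := Finset.exists_min_image _ (fun x => L x) hne
  simp only [mem_filter, mem_univ, true_and] at hu
  -- u is in the good set
  obtain ⟨c, huc, hcu⟩ := Relation.TransGen.head'_iff.mp hu
  have huT : u ∈ goodSet A L := huc.1
  have hgood := (mem_filter.mp huT).2
  rcases hgood with hout | hin
  · -- successor c has smaller label, contradiction with minimality
    have hcT : Relation.TransGen R c c := Relation.TransGen.tail' hcu huc
    have hcmem : c ∈ outN A u := by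
      simp only [outN, mem_filter, mem_univ, true_and]; exact huc.2.2
    have hle : L c ≤ L u := hout c hcmem
    have hne' : c ≠ u := fun h => hA u (h ▸ huc.2.2)
    have : L u ≤ L c := hmin c (by simp [hcT])
    exact hne' (L.injective (le_antisymm hle this))
  · -- predecessor p
    obtain ⟨p, hup, hpu⟩ := Relation.TransGen.tail'_iff.mp hu
    have hpT : Relation.TransGen R p p := Relation.TransGen.head' hpu hup
    have hpmem : p ∈ inN A u := by
      simp only [inN, mem_filter, mem_univ, true_and]; exact hpu.2.2
    have hle : L p ≤ L u := hin p hpmem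
    have hne' : p ≠ u := fun h => hA u (h ▸ hpu.2.2)
    have : L u ≤ L p := hmin p (by simp [hpT])
    exact hne' (L.injective (le_antisymm hle this))

/-- Counting: the number of labelings for which `u` is the max of `B` is
`N / #B` when `u ∈ B`. -/
lemma count_max [Fintype V] (B : Finset V) (u : V) (hu : u ∈ B) :
    B.card * (univ.filter
      (fun L : V ≃ Fin (Fintype.card V) => ∀ w ∈ B, L w ≤ L u)).card
      = Fintype.card (V ≃ Fin (Fintype.card V)) := by
  classical
  set F : V → Finset (V ≃ Fin (Fintype.card V)) :=
    fun b => univ.filter (fun L => ∀ w ∈ B, L w ≤ L b) with hF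
  have key : ∀ b ∈ B, (F b).card = (F u).card := by
    intro b hb
    have hmap : ∀ c ∈ B, ∀ d ∈ B, ∀ L : V ≃ Fin (Fintype.card V),
        (∀ w ∈ B, L w ≤ L c) → (∀ w ∈ B, ((Equiv.swap c d).trans L) w ≤ ((Equiv.swap c d).trans L) d) := by
      intro c hc d hd L hL w hw
      simp only [Equiv.trans_apply, Equiv.swap_apply_right]
      rcases eq_or_ne w c with rfl | hwc
      · exact hL _ (by rwa [Equiv.swap_apply_left])
      rcases eq_or_ne w d with rfl | hwd
      · exact hL _ (by rwa [Equiv.swap_apply_right])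
      · rw [Equiv.swap_apply_of_ne_of_ne hwc hwd]; exact hL w hw
    refine Finset.card_nbij' (fun L => (Equiv.swap u b).trans L)
      (fun L => (Equiv.swap u b).trans L) ?_ ?_ ?_ ?_
    · intro L hL
      simp only [hF, mem_coe, mem_filter, mem_univ, true_and] at hL ⊢
      have := hmap b hb u hu L hL
      rwa [Equiv.swap_comm] at this
    · intro L hL
      simp only [hF, mem_coe, mem_filter, mem_univ, true_and] at hL ⊢
      exact hmap u hu b hb L hL
    · intro L _; ext x; simp [Equiv.swap_apply_self]
    · intro L _; ext x; simp [Equiv.swap_apply_self]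
  have hdisj : (B : Set V).PairwiseDisjoint F := by
    intro b hb c hc hbc
    simp only [Finset.disjoint_left]
    intro L hLb hLc
    simp only [hF, mem_filter, mem_univ, true_and] at hLb hLc
    exact hbc (L.injective (le_antisymm (hLc b hb) (hLb c hc)))
  have hcover : B.biUnion F = univ := by
    ext L
    simp only [mem_biUnion, mem_univ, iff_true]
    obtain ⟨b, hb, hmax⟩ := Finset.exists_max_image B (fun w => L w) ⟨u, hu⟩
    exact ⟨b, hb, by simp only [hF, mem_filter, mem_univ, true_and]; exact hmax⟩
  calc B.card * (F u).card = ∑ _b ∈ B, (F u).card := by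
        rw [Finset.sum_const, smul_eq_mul]
    _ = ∑ b ∈ B, (F b).card := (Finset.sum_congr rfl key).symm
    _ = (B.biUnion F).card := (Finset.card_biUnion hdisj).symm
    _ = Fintype.card (V ≃ Fin (Fintype.card V)) := by rw [hcover, Finset.card_univ]

lemma aux_div (d c Nr : ℝ) (hd : 0 ≤ d) (hN : 0 < Nr) (h : (d + 1) * c = Nr) :
    1 / (1 + d) = c / Nr := by
  have h1 : 0 < 1 + d := by linarith
  field_simp
  nlinarith [h]

set_option maxHeartbeats 1000000 in
/-- AGJS bound: there is an acyclic vertex set of size at least `Σ_v ρ_D(v)`. -/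
theorem stmt_2 [Fintype V] (A : V → V → Prop) (hA : Irreflexive A) :
    ∃ T : Finset V, IsAcyclicOn A T ∧ (∑ v : V, rho A v) ≤ (T.card : ℝ) := by
  classical
  set n := Fintype.card V
  set N := Fintype.card (V ≃ Fin n) with hN
  have hNpos : 0 < N := Fintype.card_pos_iff.mpr ⟨Fintype.equivFin V⟩
  -- counts for each vertex
  set cOut : V → ℕ := fun u => (univ.filter
    (fun L : V ≃ Fin n => ∀ w ∈ outN A u, L w ≤ L u)).card with hcOut
  set cIn : V → ℕ := fun u => (univ.filter
    (fun L : V ≃ Fin n => ∀ w ∈ inN A u, L w ≤ L u)).card with hcIn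
  set cBoth : V → ℕ := fun u => (univ.filter
    (fun L : V ≃ Fin n => (∀ w ∈ outN A u, L w ≤ L u) ∧ (∀ w ∈ inN A u, L w ≤ L u))).card with hcBoth
  set cOr : V → ℕ := fun u => (univ.filter
    (fun L : V ≃ Fin n => (∀ w ∈ outN A u, L w ≤ L u) ∨ (∀ w ∈ inN A u, L w ≤ L u))).card with hcOr
  have hnotmem_out : ∀ u : V, u ∉ outN A u := by
    intro u h; exact hA u (by simpa [outN] using h)
  have hnotmem_in : ∀ u : V, u ∉ inN A u := by
    intro u h; exact hA u (by simpa [inN] using h)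
  have hnotmem_nb : ∀ u : V, u ∉ nbhd A u := by
    intro u h
    rcases Finset.mem_union.mp h with h | h
    exacts [hnotmem_out u h, hnotmem_in u h]
  -- count identities
  have hOut : ∀ u : V, ((outN A u).card + 1) * cOut u = N := by
    intro u
    have h := count_max (insert u (outN A u)) u (mem_insert_self u _)
    rw [Finset.card_insert_of_notMem (hnotmem_out u)] at h
    have heq : (univ.filter
        (fun L : V ≃ Fin n => ∀ w ∈ insert u (outN A u), L w ≤ L u))
        = (univ.filter (fun L : V ≃ Fin n => ∀ w ∈ outN A u, L w ≤ L u)) := by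
      apply Finset.filter_congr
      intro L _
      simp only [Finset.mem_insert, eq_iff_iff]
      constructor
      · intro h' w hw; exact h' w (Or.inr hw)
      · rintro h' w (rfl | hw); exacts [le_refl _, h' w hw]
    rw [heq] at h
    exact h
  have hIn : ∀ u : V, ((inN A u).card + 1) * cIn u = N := by
    intro u
    have h := count_max (insert u (inN A u)) u (mem_insert_self u _)
    rw [Finset.card_insert_of_notMem (hnotmem_in u)] at h
    have heq : (univ.filter
        (fun L : V ≃ Fin n => ∀ w ∈ insert u (inN A u), L w ≤ L u))
        = (univ.filter (fun L : V ≃ Fin n => ∀ w ∈ inN A u, L w ≤ L u)) := by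
      apply Finset.filter_congr
      intro L _
      simp only [Finset.mem_insert, eq_iff_iff]
      constructor
      · intro h' w hw; exact h' w (Or.inr hw)
      · rintro h' w (rfl | hw); exacts [le_refl _, h' w hw]
    rw [heq] at h
    exact h
  have hBoth : ∀ u : V, ((nbhd A u).card + 1) * cBoth u = N := by
    intro u
    have h := count_max (insert u (nbhd A u)) u (mem_insert_self u _)
    rw [Finset.card_insert_of_notMem (hnotmem_nb u)] at h
    have heq : (univ.filter
        (fun L : V ≃ Fin n => ∀ w ∈ insert u (nbhd A u), L w ≤ L u))
        = (univ.filter (fun L : V ≃ Fin n =>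
            (∀ w ∈ outN A u, L w ≤ L u) ∧ (∀ w ∈ inN A u, L w ≤ L u))) := by
      apply Finset.filter_congr
      intro L _
      simp only [Finset.mem_insert, nbhd, Finset.mem_union, eq_iff_iff]
      constructor
      · intro h'
        exact ⟨fun w hw => h' w (Or.inr (Or.inl hw)), fun w hw => h' w (Or.inr (Or.inr hw))⟩
      · rintro ⟨h1, h2⟩ w (rfl | hw | hw)
        exacts [le_refl _, h1 w hw, h2 w hw]
    rw [heq] at h
    exact h
  -- inclusion-exclusion
  have hIE : ∀ u : V, cOr u + cBoth u = cOut u + cIn u := by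
    intro u
    have := Finset.card_union_add_card_inter
      (univ.filter (fun L : V ≃ Fin n => ∀ w ∈ outN A u, L w ≤ L u))
      (univ.filter (fun L : V ≃ Fin n => ∀ w ∈ inN A u, L w ≤ L u))
    rwa [← Finset.filter_or, ← Finset.filter_and] at this
  -- rho in terms of counts
  have hrho : ∀ u : V, rho A u = (cOr u : ℝ) / N := by
    intro u
    have e1 : (1 : ℝ) / (1 + (outN A u).card) = (cOut u : ℝ) / N :=
      aux_div _ _ _ (Nat.cast_nonneg _) (by exact_mod_cast hNpos) (by exact_mod_cast hOut u)
    have e2 : (1 : ℝ) / (1 + (inN A u).card) = (cIn u : ℝ) / N :=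
      aux_div _ _ _ (Nat.cast_nonneg _) (by exact_mod_cast hNpos) (by exact_mod_cast hIn u)
    have e3 : (1 : ℝ) / (1 + (nbhd A u).card) = (cBoth u : ℝ) / N :=
      aux_div _ _ _ (Nat.cast_nonneg _) (by exact_mod_cast hNpos) (by exact_mod_cast hBoth u)
    have hIEu : (cOr u : ℝ) = cOut u + cIn u - cBoth u := by
      have := hIE u
      have : ((cOr u + cBoth u : ℕ) : ℝ) = ((cOut u + cIn u : ℕ) : ℝ) := by rw [this]
      push_cast at this; linarith
    rw [rho, e1, e2, e3, hIEu]; ring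
  -- sum over labelings
  have hsum : ∑ L : V ≃ Fin n, ((goodSet A L).card) = ∑ u : V, cOr u := by
    have : ∀ L : V ≃ Fin n, (goodSet A L).card
        = ∑ u : V, if (∀ w ∈ outN A u, L w ≤ L u) ∨ (∀ w ∈ inN A u, L w ≤ L u) then 1 else 0 := by
      intro L; rw [goodSet, Finset.card_filter]
    rw [Finset.sum_congr rfl (fun L _ => this L), Finset.sum_comm]
    refine Finset.sum_congr rfl fun u _ => ?_
    show _ = (univ.filter (fun L : V ≃ Fin n =>
        (∀ w ∈ outN A u, L w ≤ L u) ∨ (∀ w ∈ inN A u, L w ≤ L u))).card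
    rw [Finset.card_filter]
  -- averaging
  by_contra hcon
  push_neg at hcon
  have hlt : ∀ L : V ≃ Fin n, ((goodSet A L).card : ℝ) < ∑ v : V, rho A v := by
    intro L
    exact hcon (goodSet A L) (goodSet_acyclic A hA L)
  have hStrict : (∑ L : V ≃ Fin n, ((goodSet A L).card : ℝ))
      < ∑ _L : V ≃ Fin n, (∑ v : V, rho A v) := by
    apply Finset.sum_lt_sum_of_nonempty
    · exact Finset.univ_nonempty_iff.mpr (Fintype.card_pos_iff.mp hNpos)
    · intro L _; exact hlt L
  have hL : (∑ L : V ≃ Fin n, ((goodSet A L).card : ℝ)) = ∑ u : V, (cOr u : ℝ) := by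
    rw [← Nat.cast_sum, hsum, Nat.cast_sum]
  have hR : (∑ _L : V ≃ Fin n, (∑ v : V, rho A v)) = (N : ℝ) * ∑ v : V, rho A v := by
    rw [Finset.sum_const, Finset.card_univ, ← hN, nsmul_eq_mul]
  have hrsum : (N : ℝ) * ∑ v : V, rho A v = ∑ u : V, (cOr u : ℝ) := by
    rw [Finset.mul_sum]
    refine Finset.sum_congr rfl fun u _ => ?_
    rw [hrho u]
    field_simp
  rw [hL, hR, hrsum] at hStrict
  exact lt_irrefl _ hStrict
end

section
/- Let D be a finite simple loopless digraph and L: V(D) → {1,…,n} a bijective labeling. Define S to be the set of vertices u that have both a right in-neighbor (some w ∈ N⁻(u) with L(u) < L(w)) and a right out-neighbor (some w ∈ N⁺(u) with L(u) < L(w)). Then D − S is acyclic, i.e., S is a feedback vertex set. -/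
open Finset
open scoped Classical

variable {V : Type*}

/-- Correctness of the DL algorithm: its output is a feedback vertex set. -/
theorem stmt_4 [Fintype V] (A : V → V → Prop) (hA : Irreflexive A)
    (L : V ≃ Fin (Fintype.card V)) :
    IsAcyclicOn A (Finset.univ \ DLout A L) := by
  set T := Finset.univ \ DLout A L with hT
  set R := fun x y => x ∈ T ∧ y ∈ T ∧ A x y with hR
  intro v hv
  -- the set of vertices on the cycle through v
  set C : Finset V := Finset.univ.filter
    (fun x => Relation.TransGen R v x ∧ Relation.TransGen R x v) with hC
  have hvC : v ∈ C := by simp [hC]; exact hv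
  obtain ⟨u, huC, humin⟩ := C.exists_min_image (fun x => L x) ⟨v, hvC⟩
  simp only [hC, Finset.mem_filter] at huC
  have huu : Relation.TransGen R u u := huC.2.2.trans huC.2.1
  have hmem : ∀ x, Relation.TransGen R u x → Relation.TransGen R x u → L u < L x ∨ x = u := by
    intro x hux hxu
    rcases eq_or_ne x u with h | h
    · exact Or.inr h
    · have hxC : x ∈ C := by
        simp only [hC, Finset.mem_filter]
        exact ⟨Finset.mem_univ x, huC.2.1.trans hux, hxu.trans huC.2.2⟩
      have hle := humin x hxC
      exact Or.inl (lt_of_le_of_ne hle (fun he => h (L.injective he.symm)))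
  -- successor on the cycle
  obtain ⟨s, hus, hsu⟩ := Relation.TransGen.head'_iff.mp huu
  -- predecessor on the cycle
  obtain ⟨w, huw, hwu⟩ := Relation.TransGen.tail'_iff.mp huu
  have hsne : s ≠ u := fun he => hA u (he ▸ hus.2.2)
  have hwne : w ≠ u := fun he => hA u (he ▸ hwu.2.2)
  have hsTG : Relation.TransGen R s u := by
    rcases Relation.reflTransGen_iff_eq_or_transGen.mp hsu with h | h
    · exact absurd h.symm hsne
    · exact h
  have hwTG : Relation.TransGen R u w := by
    rcases Relation.reflTransGen_iff_eq_or_transGen.mp huw with h | h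
    · exact absurd h hwne
    · exact h
  have hLs : L u < L s :=
    (hmem s (Relation.TransGen.single hus) hsTG).resolve_right hsne
  have hLw : L u < L w :=
    (hmem w hwTG (Relation.TransGen.single hwu)).resolve_right hwne
  -- so u ∈ DLout, contradicting u ∈ T
  have huT : u ∈ T := hus.1
  have : u ∈ DLout A L := by
    simp only [DLout, Finset.mem_filter, Finset.mem_univ, true_and]
    refine ⟨⟨w, ?_, hLw⟩, ⟨s, ?_, hLs⟩⟩
    · simp [inN, hwu.2.2]
    · simp [outN, hus.2.2]
  simp only [hT, Finset.mem_sdiff] at huT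
  exact huT.2 this
end

section
/- Let D be a finite simple loopless digraph with n vertices and c weakly connected components. For any labeling L, the DL algorithm's output S satisfies |S| ≤ n − c. -/
open Finset
open scoped Classical

variable {V : Type*}

/-- Worst-case bound: the DL output has size at most `n − c` where `c` is the
number of weakly connected components. -/
theorem stmt_7 [Fintype V] (A : V → V → Prop) (hA : Irreflexive A)
    (G : SimpleGraph V) (hG : ∀ x y, G.Adj x y ↔ x ≠ y ∧ (A x y ∨ A y x))
    [Fintype G.ConnectedComponent]
    (L : V ≃ Fin (Fintype.card V)) :
    (DLout A L).card ≤ Fintype.card V - Fintype.card G.ConnectedComponent := by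
  classical
  have hmax : ∀ c : G.ConnectedComponent, ∃ v, G.connectedComponentMk v = c ∧
      ∀ w, G.connectedComponentMk w = c → L w ≤ L v := by
    intro c
    obtain ⟨v0, hv0⟩ := c.exists_rep
    have hne : (univ.filter (fun v => G.connectedComponentMk v = c)).Nonempty :=
      ⟨v0, by simp [hv0]; exact hv0⟩
    obtain ⟨v, hv, hvm⟩ := Finset.exists_max_image _ (fun v => L v) hne
    exact ⟨v, (mem_filter.mp hv).2, fun w hw => hvm w (by simp [hw])⟩
  choose f hf hfmax using hmax
  have hinj : Function.Injective f := fun c d h => by rw [← hf c, ← hf d, h]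
  have hnot : ∀ c, f c ∉ DLout A L := by
    intro c hc
    simp only [DLout, mem_filter, inN, outN] at hc
    obtain ⟨-, ⟨w, hw, hlt⟩, -⟩ := hc
    have hAw : A w (f c) := hw.2
    have hne : w ≠ f c := by
      rintro rfl; exact hA _ hAw
    have hadj : G.Adj w (f c) := (hG w (f c)).mpr ⟨hne, Or.inl hAw⟩
    have hcomp : G.connectedComponentMk w = c := by
      rw [← hf c]; exact SimpleGraph.ConnectedComponent.sound hadj.reachable
    exact absurd (hfmax c w hcomp) (not_le.mpr hlt)
  have hsub : DLout A L ⊆ (Finset.univ.image f)ᶜ := by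
    intro u hu
    simp only [Finset.mem_compl, Finset.mem_image, not_exists]
    rintro c ⟨-, rfl⟩
    exact hnot c hu
  calc (DLout A L).card ≤ ((Finset.univ.image f)ᶜ).card := Finset.card_le_card hsub
    _ = Fintype.card V - (Finset.univ.image f).card := Finset.card_compl _
    _ = Fintype.card V - Fintype.card G.ConnectedComponent := by
        rw [Finset.card_image_of_injective _ hinj, Finset.card_univ]
end

section
/- Let D be a finite simple loopless digraph and let L be a uniformly random bijective labeling of V(D). For the DL output S, and any vertex v, P(v ∉ S) = 1/(1+d_v⁺) + 1/(1+d_v⁻) − 1/(1+d_v). -/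
open Finset
open scoped Classical

variable {V : Type*}

section Aux

variable [Fintype V]

private lemma class_card_eq (S : Finset V) {u v : V} (hu : u ∈ S) (hv : v ∈ S) :
    (Finset.univ.filter (fun L : V ≃ Fin (Fintype.card V) => ∀ w ∈ S, L w ≤ L u)).card
      = (Finset.univ.filter (fun L : V ≃ Fin (Fintype.card V) => ∀ w ∈ S, L w ≤ L v)).card := by
  have hswap : ∀ w ∈ S, Equiv.swap u v w ∈ S := by
    intro w hw
    rcases eq_or_ne w u with rfl | h1
    · simpa [Equiv.swap_apply_left] using hv
    rcases eq_or_ne w v with rfl | h2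
    · simpa [Equiv.swap_apply_right] using hu
    · simpa [Equiv.swap_apply_of_ne_of_ne h1 h2] using hw
  apply Finset.card_bij' (fun L _ => (Equiv.swap u v).trans L)
      (fun L _ => (Equiv.swap u v).trans L)
  · intro L hL
    simp only [Finset.mem_filter, Finset.mem_univ, true_and] at hL ⊢
    intro w hw
    simpa [Equiv.trans_apply, Equiv.swap_apply_right] using hL _ (hswap w hw)
  · intro L hL
    simp only [Finset.mem_filter, Finset.mem_univ, true_and] at hL ⊢
    intro w hw
    simpa [Equiv.trans_apply, Equiv.swap_apply_left] using hL _ (hswap w hw)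
  · intro L _
    ext x
    simp [Equiv.trans_apply, Equiv.swap_apply_self]
  · intro L _
    ext x
    simp [Equiv.trans_apply, Equiv.swap_apply_self]

private lemma partition_sum (S : Finset V) (hS : S.Nonempty) :
    ∑ u ∈ S, (Finset.univ.filter
        (fun L : V ≃ Fin (Fintype.card V) => ∀ w ∈ S, L w ≤ L u)).card
      = Fintype.card (V ≃ Fin (Fintype.card V)) := by
  classical
  set f : (V ≃ Fin (Fintype.card V)) → V :=
    fun L => L.symm ((S.image L).max' (hS.image L)) with hf
  have hfmem : ∀ L : V ≃ Fin (Fintype.card V), f L ∈ S := by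
    intro L
    have h := (S.image L).max'_mem (hS.image L)
    rw [Finset.mem_image] at h
    obtain ⟨w, hw, hw'⟩ := h
    simpa [hf, ← hw'] using hw
  have hcard := Finset.card_eq_sum_card_fiberwise
    (f := f) (s := (Finset.univ : Finset (V ≃ Fin (Fintype.card V)))) (t := S)
    (fun L _ => hfmem L)
  rw [Finset.card_univ] at hcard
  rw [hcard]
  apply Finset.sum_congr rfl
  intro u hu
  congr 1
  ext L
  simp only [Finset.mem_filter, Finset.mem_univ, true_and]
  constructor
  · intro h
    have hmax : (S.image L).max' (hS.image L) = L u := by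
      apply le_antisymm
      · apply Finset.max'_le
        intro y hy
        rw [Finset.mem_image] at hy
        obtain ⟨w, hw, rfl⟩ := hy
        exact h w hw
      · exact (S.image L).le_max' _ (Finset.mem_image_of_mem L hu)
    simp [hf, hmax]
  · intro h w hw
    have : L (f L) = (S.image L).max' (hS.image L) := by simp [hf]
    rw [h] at this
    rw [this]
    exact (S.image L).le_max' _ (Finset.mem_image_of_mem L hw)

private lemma count_mul (v : V) (T : Finset V) (hv : v ∉ T) :
    (Finset.univ.filter
        (fun L : V ≃ Fin (Fintype.card V) => ∀ w ∈ T, L w < L v)).card * (T.card + 1)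
      = Fintype.card (V ≃ Fin (Fintype.card V)) := by
  classical
  set S : Finset V := insert v T with hS
  have hvS : v ∈ S := Finset.mem_insert_self v T
  have hfilter : (Finset.univ.filter
      (fun L : V ≃ Fin (Fintype.card V) => ∀ w ∈ T, L w < L v))
      = (Finset.univ.filter
      (fun L : V ≃ Fin (Fintype.card V) => ∀ w ∈ S, L w ≤ L v)) := by
    ext L
    simp only [Finset.mem_filter, Finset.mem_univ, true_and, hS, Finset.mem_insert]
    constructor
    · rintro h w (rfl | hw)
      · exact le_refl _
      · exact (h w hw).le
    · intro h w hw
      refine lt_of_le_of_ne (h w (Or.inr hw)) ?_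
      intro hEq
      exact hv (by rwa [L.injective hEq] at hw)
  have hsum := partition_sum (V := V) S ⟨v, hvS⟩
  have hconst : ∀ u ∈ S,
      (Finset.univ.filter
        (fun L : V ≃ Fin (Fintype.card V) => ∀ w ∈ S, L w ≤ L u)).card
      = (Finset.univ.filter
        (fun L : V ≃ Fin (Fintype.card V) => ∀ w ∈ S, L w ≤ L v)).card :=
    fun u hu => class_card_eq S hu hvS
  rw [Finset.sum_congr rfl hconst, Finset.sum_const, smul_eq_mul] at hsum
  rw [hfilter, ← hsum, hS, Finset.card_insert_of_notMem hv]
  ring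

end Aux

/-- DL probability identity: `P(v ∉ S) = ρ_D(v)` for a uniformly random labeling. -/
theorem stmt_8 [Fintype V] (A : V → V → Prop) (hA : Irreflexive A) (v : V) :
    ((Finset.univ.filter (fun L : V ≃ Fin (Fintype.card V) =>
        v ∉ DLout A L)).card : ℝ) /
      (Fintype.card (V ≃ Fin (Fintype.card V)) : ℝ) = rho A v := by
  classical
  set n := Fintype.card V
  set N := Fintype.card (V ≃ Fin n) with hN
  have hNpos : 0 < N := by
    have : Nonempty (V ≃ Fin n) := ⟨Fintype.equivFin V⟩
    exact Fintype.card_pos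
  have hvin : v ∉ inN A v := by simp [inN, hA v]
  have hvout : v ∉ outN A v := by simp [outN, hA v]
  have hvnb : v ∉ nbhd A v := by simp [nbhd, Finset.mem_union, hvin, hvout]
  -- rewrite the event
  have key : ∀ L : V ≃ Fin n, v ∉ DLout A L ↔
      ((∀ w ∈ inN A v, L w < L v) ∨ (∀ w ∈ outN A v, L w < L v)) := by
    intro L
    have hconv : ∀ (T : Finset V), v ∉ T →
        ((¬ ∃ w ∈ T, L v < L w) ↔ (∀ w ∈ T, L w < L v)) := by
      intro T hvT
      push_neg
      constructor
      · intro h w hw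
        refine lt_of_le_of_ne (h w hw) ?_
        intro hEq
        exact hvT (by rwa [L.injective hEq] at hw)
      · intro h w hw
        exact (h w hw).le
    simp only [DLout, Finset.mem_filter, Finset.mem_univ, true_and, not_and_or]
    rw [hconv _ hvin, hconv _ hvout]
  have hset : (Finset.univ.filter (fun L : V ≃ Fin n => v ∉ DLout A L))
      = (Finset.univ.filter (fun L : V ≃ Fin n => ∀ w ∈ inN A v, L w < L v))
        ∪ (Finset.univ.filter (fun L : V ≃ Fin n => ∀ w ∈ outN A v, L w < L v)) := by
    rw [← Finset.filter_or]
    exact Finset.filter_congr (fun L _ => by rw [key L])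
  set a := (Finset.univ.filter (fun L : V ≃ Fin n => ∀ w ∈ inN A v, L w < L v)).card with ha
  set b := (Finset.univ.filter (fun L : V ≃ Fin n => ∀ w ∈ outN A v, L w < L v)).card with hb
  set c := (Finset.univ.filter (fun L : V ≃ Fin n => ∀ w ∈ nbhd A v, L w < L v)).card with hc
  have hinter : (Finset.univ.filter (fun L : V ≃ Fin n => ∀ w ∈ inN A v, L w < L v))
      ∩ (Finset.univ.filter (fun L : V ≃ Fin n => ∀ w ∈ outN A v, L w < L v))
      = (Finset.univ.filter (fun L : V ≃ Fin n => ∀ w ∈ nbhd A v, L w < L v)) := by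
    rw [← Finset.filter_and]
    apply Finset.filter_congr
    intro L _
    simp only [nbhd, Finset.mem_union]
    constructor
    · rintro ⟨h1, h2⟩ w hw
      rcases hw with hw | hw
      · exact h2 w hw
      · exact h1 w hw
    · intro h
      exact ⟨fun w hw => h w (Or.inr hw), fun w hw => h w (Or.inl hw)⟩
  have hunion : ((Finset.univ.filter (fun L : V ≃ Fin n => v ∉ DLout A L)).card : ℝ)
      = (a : ℝ) + b - c := by
    have := Finset.card_union_add_card_inter
      (Finset.univ.filter (fun L : V ≃ Fin n => ∀ w ∈ inN A v, L w < L v))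
      (Finset.univ.filter (fun L : V ≃ Fin n => ∀ w ∈ outN A v, L w < L v))
    rw [hinter] at this
    rw [hset]
    have := congrArg (fun x : ℕ => (x : ℝ)) this
    push_cast at this ⊢
    linarith
  have hmula := count_mul v (inN A v) hvin
  have hmulb := count_mul v (outN A v) hvout
  have hmulc := count_mul v (nbhd A v) hvnb
  have hNne : (N : ℝ) ≠ 0 := Nat.cast_ne_zero.mpr hNpos.ne'
  have hratio : ∀ (x k : ℕ), x * (k + 1) = N → (x : ℝ) / N = 1 / (1 + k) := by
    intro x k hx
    have hk : (1 : ℝ) + k ≠ 0 := by positivity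
    rw [div_eq_div_iff hNne hk]
    have := congrArg (fun m : ℕ => (m : ℝ)) hx
    push_cast at this
    linarith
  rw [hunion, rho]
  rw [sub_div, add_div]
  rw [hratio a _ hmula, hratio b _ hmulb, hratio c _ hmulc]
  ring
end

section
/- Let X, Y be finite sets of vertices and v, w two distinct vertices with v, w ∉ X ∪ Y. In a uniformly random linear order of Z = X ∪ Y ∪ {v, w}, the probability that all elements of X precede v and all elements of Y precede w equals (1/(|X|+|Y|−|X∩Y|+2)) · (1/(|X|+1) + 1/(|Y|+1)). -/
open Finset
open scoped Classical Nat

lemma fiber_lemma {γ : Type*} [Fintype γ] [DecidableEq γ] {n : ℕ}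
    (T : Finset γ) (t : γ) (ht : t ∉ T) (Q : (γ ≃ Fin n) → Prop)
    (hQ : ∀ u ∈ T, ∀ L, Q ((Equiv.swap u t).trans L) ↔ Q L) :
    (T.card + 1) *
      (univ.filter (fun L : γ ≃ Fin n => (∀ a ∈ T, L a < L t) ∧ Q L)).card
      = (univ.filter (fun L : γ ≃ Fin n => Q L)).card := by
  classical
  set S : Finset γ := insert t T with hS
  set A : γ → Finset (γ ≃ Fin n) :=
    fun u => univ.filter (fun L => (∀ a ∈ S, a ≠ u → L a < L u) ∧ Q L) with hA
  have htS : t ∈ S := mem_insert_self t T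
  have hcover : univ.filter (fun L : γ ≃ Fin n => Q L) = S.biUnion A := by
    ext L
    simp only [mem_filter, mem_univ, true_and, mem_biUnion, hA]
    constructor
    · intro hq
      obtain ⟨u, hu, hmax⟩ := S.exists_max_image (fun a => L a) ⟨t, htS⟩
      exact ⟨u, hu, fun a ha hne => lt_of_le_of_ne (hmax a ha) (fun e => hne (L.injective e)), hq⟩
    · rintro ⟨u, -, -, hq⟩; exact hq
  have hdisj : ∀ u ∈ S, ∀ u' ∈ S, u ≠ u' → Disjoint (A u) (A u') := by
    intro u hu u' hu' hne
    rw [Finset.disjoint_left]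
    rintro L hL hL'
    simp only [hA, mem_filter] at hL hL'
    exact absurd (lt_trans (hL.2.1 u' hu' hne.symm) (hL'.2.1 u hu hne)) (lt_irrefl _)
  have hcardA : ∀ u ∈ S, (A u).card = (A t).card := by
    intro u hu
    rcases eq_or_ne u t with rfl | hut
    · rfl
    have huT : u ∈ T := by
      rcases mem_insert.mp hu with h | h
      · exact absurd h hut
      · exact h
    have hswap : ∀ L : γ ≃ Fin n,
        (Equiv.swap u t).trans ((Equiv.swap u t).trans L) = L := by
      intro L
      rw [← Equiv.trans_assoc, Equiv.swap_swap, Equiv.refl_trans]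
    apply Finset.card_bij' (fun L _ => (Equiv.swap u t).trans L)
      (fun M _ => (Equiv.swap u t).trans M)
    · intro L hL
      simp only [hA, mem_filter, mem_univ, true_and] at hL ⊢
      obtain ⟨hmax, hq⟩ := hL
      refine ⟨?_, (hQ u huT L).mpr hq⟩
      intro a ha hat
      simp only [Equiv.trans_apply, Equiv.swap_apply_right]
      rcases eq_or_ne a u with rfl | hau
      · rw [Equiv.swap_apply_left]
        exact hmax t htS (Ne.symm hut)
      · rw [Equiv.swap_apply_of_ne_of_ne hau hat]
        exact hmax a ha hau
    · intro M hM
      simp only [hA, mem_filter, mem_univ, true_and] at hM ⊢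
      obtain ⟨hmax, hq⟩ := hM
      refine ⟨?_, (hQ u huT _).mp (by rw [hswap]; exact hq)⟩
      intro a ha hau
      simp only [Equiv.trans_apply, Equiv.swap_apply_left]
      rcases eq_or_ne a t with rfl | hat
      · rw [Equiv.swap_apply_right]
        exact hmax u (mem_insert_of_mem huT) hut
      · rw [Equiv.swap_apply_of_ne_of_ne hau hat]
        exact hmax a ha hat
    · intro L _; exact hswap L
    · intro M _; exact hswap M
  have hAt : A t = univ.filter (fun L : γ ≃ Fin n => (∀ a ∈ T, L a < L t) ∧ Q L) := by
    apply filter_congr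
    intro L _
    constructor
    · rintro ⟨hmax, hq⟩
      exact ⟨fun a ha => hmax a (mem_insert_of_mem ha) (fun e => ht (e ▸ ha)), hq⟩
    · rintro ⟨hmax, hq⟩
      refine ⟨?_, hq⟩
      intro a ha hat
      rcases mem_insert.mp ha with h | h
      · exact absurd h hat
      · exact hmax a h
  rw [hcover, Finset.card_biUnion hdisj]
  rw [Finset.sum_congr rfl hcardA, Finset.sum_const, hAt]
  rw [hS, card_insert_of_notMem ht, smul_eq_mul]

lemma fiber_count {γ : Type*} [Fintype γ] [DecidableEq γ] {n : ℕ}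
    (hn : Fintype.card γ = n) (T : Finset γ) (t : γ) (ht : t ∉ T) :
    (T.card + 1) *
      (univ.filter (fun L : γ ≃ Fin n => ∀ a ∈ T, L a < L t)).card = n ! := by
  have h := fiber_lemma (n := n) T t ht (fun _ => True) (fun _ _ _ => Iff.rfl)
  simp only [and_true, Finset.filter_congr_decidable, Finset.filter_true] at h
  rwa [card_univ, Fintype.card_equiv (Fintype.equivFinOfCardEq hn), hn] at h

lemma max_inv {γ : Type*} [Fintype γ] [DecidableEq γ] {n : ℕ} (vv : γ)
    (σ : γ ≃ γ) (hσ : σ vv = vv) (L : γ ≃ Fin n)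
    (h : ∀ a ∈ univ.erase vv, L a < L vv) :
    ∀ a ∈ univ.erase vv, (σ.trans L) a < (σ.trans L) vv := by
  intro a ha
  rw [mem_erase] at ha
  simp only [Equiv.trans_apply, hσ]
  refine h (σ a) (mem_erase.mpr ⟨fun e => ha.1 ?_, mem_univ _⟩)
  exact σ.injective (by rw [e, hσ])

lemma max_inv_iff {γ : Type*} [Fintype γ] [DecidableEq γ] {n : ℕ} (vv u t : γ)
    (hu : u ≠ vv) (ht : t ≠ vv) (L : γ ≃ Fin n) :
    (∀ a ∈ univ.erase vv, ((Equiv.swap u t).trans L) a < ((Equiv.swap u t).trans L) vv) ↔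
    (∀ a ∈ univ.erase vv, L a < L vv) := by
  have hfix : Equiv.swap u t vv = vv := Equiv.swap_apply_of_ne_of_ne (Ne.symm hu) (Ne.symm ht)
  constructor
  · intro h
    have := max_inv vv (Equiv.swap u t) hfix _ h
    rwa [← Equiv.trans_assoc, Equiv.swap_swap, Equiv.refl_trans] at this
  · exact max_inv vv (Equiv.swap u t) hfix L

lemma card_filter_coe {α : Type*} [DecidableEq α] (Z W : Finset α) (hWZ : W ⊆ Z) :
    (univ.filter (fun a : ↥Z => (a : α) ∈ W)).card = W.card := by
  classical
  refine Finset.card_bij (fun (a : ↥Z) _ => (a : α)) ?_ ?_ ?_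
  · intro a ha
    exact (mem_filter.mp ha).2
  · intro a _ a' _ h
    exact Subtype.ext h
  · intro b hb
    exact ⟨⟨b, hWZ hb⟩, mem_filter.mpr ⟨mem_univ _, hb⟩, rfl⟩

set_option maxHeartbeats 1000000 in
/-- General ordering lemma: in a uniformly random linear order of
`Z = X ∪ Y ∪ {v, w}` (with `v ≠ w` not in `X ∪ Y`), the probability that all of
`X` precedes `v` and all of `Y` precedes `w` equals
`(1/(|X|+|Y|−|X∩Y|+2)) (1/(|X|+1) + 1/(|Y|+1))`. -/
theorem stmt_10 {α : Type*} (X Y : Finset α) (v w : α)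
    (hv : v ∉ X ∪ Y) (hw : w ∉ X ∪ Y) (hvw : v ≠ w)
    (Z : Finset α) (hZ : Z = X ∪ Y ∪ {v, w}) (hvZ : v ∈ Z) (hwZ : w ∈ Z) :
    ((Finset.univ.filter (fun L : ↥Z ≃ Fin Z.card =>
        (∀ a : ↥Z, (a : α) ∈ X → L a < L ⟨v, hvZ⟩) ∧
        (∀ a : ↥Z, (a : α) ∈ Y → L a < L ⟨w, hwZ⟩))).card : ℝ) /
      (Fintype.card (↥Z ≃ Fin Z.card) : ℝ) =
    (1 / ((X.card : ℝ) + (Y.card : ℝ) - ((X ∩ Y).card : ℝ) + 2)) *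
      (1 / ((X.card : ℝ) + 1) + 1 / ((Y.card : ℝ) + 1)) := by
  classical
  have hvX : v ∉ X := fun h => hv (mem_union_left _ h)
  have hvY : v ∉ Y := fun h => hv (mem_union_right _ h)
  have hwX : w ∉ X := fun h => hw (mem_union_left _ h)
  have hwY : w ∉ Y := fun h => hw (mem_union_right _ h)
  set vv : ↥Z := ⟨v, hvZ⟩ with hvv
  set ww : ↥Z := ⟨w, hwZ⟩ with hww
  have hvvww : vv ≠ ww := fun h => hvw (congrArg Subtype.val h)
  set n : ℕ := Z.card with hn
  have hXZ : X ⊆ Z := by rw [hZ]; exact (subset_union_left).trans subset_union_left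
  have hYZ : Y ⊆ Z := by rw [hZ]; exact (subset_union_right).trans subset_union_left
  set TX : Finset ↥Z := univ.filter (fun a : ↥Z => (a : α) ∈ X) with hTX
  set TY : Finset ↥Z := univ.filter (fun a : ↥Z => (a : α) ∈ Y) with hTY
  have hTXc : TX.card = X.card := card_filter_coe Z X hXZ
  have hTYc : TY.card = Y.card := card_filter_coe Z Y hYZ
  have hcardZ : Fintype.card ↥Z = n := Fintype.card_coe Z
  obtain ⟨m, hm⟩ : ∃ m, n = m + 1 :=
    ⟨n - 1, (Nat.succ_pred_eq_of_pos (card_pos.mpr ⟨v, hvZ⟩)).symm⟩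
  set Fv : Finset (↥Z ≃ Fin n) :=
    univ.filter (fun L => ∀ a ∈ univ.erase vv, L a < L vv) with hFv
  set Fw : Finset (↥Z ≃ Fin n) :=
    univ.filter (fun L => ∀ a ∈ univ.erase ww, L a < L ww) with hFw
  have hFvcard : Fv.card = m ! := by
    have h1 := fiber_count hcardZ (univ.erase vv) vv (notMem_erase _ _)
    have hn1 : (univ.erase vv : Finset ↥Z).card + 1 = n := by
      rw [card_erase_of_mem (mem_univ vv), card_univ, hcardZ, hm]
      omega
    have hfact : n ! = n * m ! := by rw [hm, Nat.factorial_succ]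
    rw [hn1, hfact] at h1
    have h2 : n * Fv.card = n * m ! := by
      convert h1 using 3
      all_goals solve
        | rfl
        | (rw [hFv]; congr)
    exact Nat.eq_of_mul_eq_mul_left (hm ▸ Nat.succ_pos m) h2
  have hFwcard : Fw.card = m ! := by
    have h1 := fiber_count hcardZ (univ.erase ww) ww (notMem_erase _ _)
    have hn1 : (univ.erase ww : Finset ↥Z).card + 1 = n := by
      rw [card_erase_of_mem (mem_univ ww), card_univ, hcardZ, hm]
      omega
    have hfact : n ! = n * m ! := by rw [hm, Nat.factorial_succ]
    rw [hn1, hfact] at h1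
    have h2 : n * Fw.card = n * m ! := by
      convert h1 using 3
      all_goals solve
        | rfl
        | (rw [hFw]; congr)
    exact Nat.eq_of_mul_eq_mul_left (hm ▸ Nat.succ_pos m) h2
  set FA : Finset (↥Z ≃ Fin n) :=
    univ.filter (fun L => (∀ a ∈ TY, L a < L ww) ∧ ∀ a ∈ univ.erase vv, L a < L vv) with hFA
  set FB : Finset (↥Z ≃ Fin n) :=
    univ.filter (fun L => (∀ a ∈ TX, L a < L vv) ∧ ∀ a ∈ univ.erase ww, L a < L ww) with hFB
  have hwTY : ww ∉ TY := fun h => hwY (mem_filter.mp h).2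
  have hvTX : vv ∉ TX := fun h => hvX (mem_filter.mp h).2
  have eA : (Y.card + 1) * FA.card = m ! := by
    have h1 := fiber_lemma (n := n) TY ww hwTY
      (fun L => ∀ a ∈ univ.erase vv, L a < L vv) ?_
    · rw [hTYc] at h1
      have h2 : (Y.card + 1) * FA.card = Fv.card := by
        convert h1 using 3
        all_goals solve
          | rfl
          | (rw [hFA]; congr)
          | (rw [hFv]; congr)
      rw [hFvcard] at h2
      exact h2
    · intro u hu L
      have huY : (u : α) ∈ Y := (mem_filter.mp hu).2
      refine max_inv_iff vv u ww ?_ (Ne.symm hvvww) L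
      intro e
      rw [show ((u : α)) = v from congrArg Subtype.val e] at huY
      exact hvY huY
  have eB : (X.card + 1) * FB.card = m ! := by
    have h1 := fiber_lemma (n := n) TX vv hvTX
      (fun L => ∀ a ∈ univ.erase ww, L a < L ww) ?_
    · rw [hTXc] at h1
      have h2 : (X.card + 1) * FB.card = Fw.card := by
        convert h1 using 3
        all_goals solve
          | rfl
          | (rw [hFB]; congr)
          | (rw [hFw]; congr)
      rw [hFwcard] at h2
      exact h2
    · intro u hu L
      have huX : (u : α) ∈ X := (mem_filter.mp hu).2
      refine max_inv_iff ww u vv ?_ hvvww L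
      intro e
      rw [show ((u : α)) = w from congrArg Subtype.val e] at huX
      exact hwX huX
  -- split the event
  have hsplit : (Finset.univ.filter (fun L : ↥Z ≃ Fin n =>
        (∀ a : ↥Z, (a : α) ∈ X → L a < L vv) ∧
        (∀ a : ↥Z, (a : α) ∈ Y → L a < L ww))) = FA ∪ FB := by
    rw [hFA, hFB, ← filter_or]
    apply filter_congr
    intro L _
    constructor
    · rintro ⟨hX1, hY1⟩
      have hne : L vv ≠ L ww := fun h => hvvww (L.injective h)
      rcases hne.lt_or_gt with h | h
      · right
        refine ⟨fun a ha => hX1 a (mem_filter.mp ha).2, fun a ha => ?_⟩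
        have ha' : a ≠ ww := (mem_erase.mp ha).1
        have haZ : (a : α) ∈ X ∪ Y ∪ {v, w} := by rw [← hZ]; exact a.2
        rcases mem_union.mp haZ with h1 | h1
        · rcases mem_union.mp h1 with h2 | h2
          · exact lt_trans (hX1 a h2) h
          · exact hY1 a h2
        · rcases mem_insert.mp h1 with h2 | h2
          · rw [show a = vv from Subtype.ext h2]; exact h
          · exact absurd (Subtype.ext (mem_singleton.mp h2)) ha'
      · left
        refine ⟨fun a ha => hY1 a (mem_filter.mp ha).2, fun a ha => ?_⟩
        have ha' : a ≠ vv := (mem_erase.mp ha).1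
        have haZ : (a : α) ∈ X ∪ Y ∪ {v, w} := by rw [← hZ]; exact a.2
        rcases mem_union.mp haZ with h1 | h1
        · rcases mem_union.mp h1 with h2 | h2
          · exact hX1 a h2
          · exact lt_trans (hY1 a h2) h
        · rcases mem_insert.mp h1 with h2 | h2
          · exact absurd (Subtype.ext h2) ha'
          · rw [show a = ww from Subtype.ext (mem_singleton.mp h2)]; exact h
    · rintro (⟨hY1, hvm⟩ | ⟨hX1, hwm⟩)
      · refine ⟨fun a ha => hvm a (mem_erase.mpr ⟨?_, mem_univ _⟩),
          fun a ha => hY1 a (mem_filter.mpr ⟨mem_univ _, ha⟩)⟩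
        intro e
        rw [show ((a : α)) = v from congrArg Subtype.val e] at ha
        exact hvX ha
      · refine ⟨fun a ha => hX1 a (mem_filter.mpr ⟨mem_univ _, ha⟩),
          fun a ha => hwm a (mem_erase.mpr ⟨?_, mem_univ _⟩)⟩
        intro e
        rw [show ((a : α)) = w from congrArg Subtype.val e] at ha
        exact hwY ha
  have hdisjAB : Disjoint FA FB := by
    rw [Finset.disjoint_left]
    intro L hLA hLB
    rw [hFA, mem_filter] at hLA
    rw [hFB, mem_filter] at hLB
    have h1 := hLA.2.2 ww (mem_erase.mpr ⟨Ne.symm hvvww, mem_univ _⟩)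
    have h2 := hLB.2.2 vv (mem_erase.mpr ⟨hvvww, mem_univ _⟩)
    exact absurd (lt_trans h1 h2) (lt_irrefl _)
  -- cardinality of Z
  have hZcard : (n : ℝ) = (X.card : ℝ) + (Y.card : ℝ) - ((X ∩ Y).card : ℝ) + 2 := by
    have hdisjU : Disjoint (X ∪ Y) ({v, w} : Finset α) := by
      rw [Finset.disjoint_right]
      intro a ha
      rcases mem_insert.mp ha with rfl | h
      · exact hv
      · rw [mem_singleton.mp h]; exact hw
    have h2 : ({v, w} : Finset α).card = 2 := by
      rw [card_insert_of_notMem (by simpa using hvw), card_singleton]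
    have h3 : n = (X ∪ Y).card + 2 := by
      rw [hn, hZ, card_union_of_disjoint hdisjU, h2]
    have h4 : ((X ∪ Y).card : ℝ) + ((X ∩ Y).card : ℝ) = (X.card : ℝ) + (Y.card : ℝ) := by
      exact_mod_cast card_union_add_card_inter X Y
    rw [h3]
    push_cast
    linarith
  have htot : (Fintype.card (↥Z ≃ Fin n) : ℝ) = (n : ℝ) * (m ! : ℝ) := by
    rw [Fintype.card_equiv (Fintype.equivFinOfCardEq hcardZ), hcardZ, hm,
      Nat.factorial_succ]
    push_cast
    ring
  -- final arithmetic
  have hFpos : (0 : ℝ) < (m ! : ℝ) := by exact_mod_cast Nat.factorial_pos m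
  have hb1 : (0 : ℝ) < (Y.card : ℝ) + 1 := by
    have : (0 : ℝ) ≤ (Y.card : ℝ) := Nat.cast_nonneg _
    linarith
  have ha1 : (0 : ℝ) < (X.card : ℝ) + 1 := by
    have : (0 : ℝ) ≤ (X.card : ℝ) := Nat.cast_nonneg _
    linarith
  have hnpos : (0 : ℝ) < (n : ℝ) := by
    rw [hm]
    have : (0 : ℝ) ≤ (m : ℝ) := Nat.cast_nonneg _
    push_cast
    linarith
  have rA : ((Y.card : ℝ) + 1) * (FA.card : ℝ) = (m ! : ℝ) := by exact_mod_cast eA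
  have rB : ((X.card : ℝ) + 1) * (FB.card : ℝ) = (m ! : ℝ) := by exact_mod_cast eB
  have hAr : (FA.card : ℝ) = (m ! : ℝ) / ((Y.card : ℝ) + 1) := by
    rw [eq_div_iff (ne_of_gt hb1)]
    linarith [rA]
  have hBr : (FB.card : ℝ) = (m ! : ℝ) / ((X.card : ℝ) + 1) := by
    rw [eq_div_iff (ne_of_gt ha1)]
    linarith [rB]
  rw [hsplit, card_union_of_disjoint hdisjAB, htot, ← hZcard]
  push_cast
  rw [hAr, hBr]
  have hne : ((n : ℝ) * (m ! : ℝ)) ≠ 0 := ne_of_gt (mul_pos hnpos hFpos)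
  rw [div_eq_iff hne]
  have hcancel : (n : ℝ) * (1 / (n : ℝ)) = 1 := mul_one_div_cancel (ne_of_gt hnpos)
  calc (m ! : ℝ) / ((Y.card : ℝ) + 1) + (m ! : ℝ) / ((X.card : ℝ) + 1)
      = (1 / ((X.card : ℝ) + 1) + 1 / ((Y.card : ℝ) + 1)) * (m ! : ℝ) * 1 := by ring
    _ = (1 / ((X.card : ℝ) + 1) + 1 / ((Y.card : ℝ) + 1)) * (m ! : ℝ)
          * ((n : ℝ) * (1 / (n : ℝ))) := by rw [hcancel]
    _ = 1 / (n : ℝ) * (1 / ((X.card : ℝ) + 1) + 1 / ((Y.card : ℝ) + 1))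
          * ((n : ℝ) * (m ! : ℝ)) := by ring
end

section
/- Let D be a finite simple loopless digraph with n vertices and c weakly connected components, and let S be the random feedback vertex set output by the DL algorithm under a uniformly random labeling. If Σ_v ρ_D(v) > c, then ⍺⃗(D) ≥ Σ_{v∈V(D)} ρ_D(v) + Var(|S|) / (Σ_{v∈V(D)} ρ_D(v) − c). -/
open Finset
open scoped Classical

variable {V : Type*}

section cnt
variable [Fintype V]

/-- labelings making `u` the argmax of `U` -/
noncomputable def maxSet (U : Finset V) (u : V) : Finset (V ≃ Fin (Fintype.card V)) :=
  univ.filter (fun L => ∀ w ∈ U, w ≠ u → L w < L u)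

noncomputable def argmaxL (U : Finset V) (hU : U.Nonempty) (L : V ≃ Fin (Fintype.card V)) : V :=
  L.symm ((U.image L).max' (hU.image L))

lemma argmaxL_mem (U : Finset V) (hU : U.Nonempty) (L : V ≃ Fin (Fintype.card V)) :
    argmaxL U hU L ∈ U := by
  have h := (U.image L).max'_mem (hU.image L)
  rw [mem_image] at h
  obtain ⟨w, hw, hw2⟩ := h
  rw [argmaxL, ← hw2]
  simpa using hw

lemma mem_maxSet_iff (U : Finset V) (hU : U.Nonempty) (u : V) (hu : u ∈ U)
    (L : V ≃ Fin (Fintype.card V)) : L ∈ maxSet U u ↔ argmaxL U hU L = u := by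
  constructor
  · intro hL
    rw [maxSet, mem_filter] at hL
    by_contra hne
    have h1 : L (argmaxL U hU L) < L u := hL.2 _ (argmaxL_mem U hU L) hne
    have h2 : L u ≤ L (argmaxL U hU L) := by
      rw [argmaxL, Equiv.apply_symm_apply]
      exact (U.image L).le_max' _ (mem_image_of_mem L hu)
    exact absurd h1 (not_lt.mpr h2)
  · intro h
    rw [maxSet, mem_filter]
    refine ⟨mem_univ _, fun w hw hne => ?_⟩
    have h2 : L w ≤ L (argmaxL U hU L) := by
      rw [argmaxL, Equiv.apply_symm_apply]
      exact (U.image L).le_max' _ (mem_image_of_mem L hw)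
    rw [h] at h2
    exact lt_of_le_of_ne h2 (fun he => hne (L.injective he))

lemma sum_maxSet_card (U : Finset V) (hU : U.Nonempty) :
    ∑ u ∈ U, (maxSet U u).card = Fintype.card (V ≃ Fin (Fintype.card V)) := by
  classical
  have h := Finset.card_eq_sum_card_fiberwise (f := argmaxL U hU)
    (s := (univ : Finset (V ≃ Fin (Fintype.card V)))) (t := U)
    (fun L _ => argmaxL_mem U hU L)
  have h2 : Fintype.card (V ≃ Fin (Fintype.card V)) = ∑ b ∈ U, (univ.filter (fun a => argmaxL U hU a = b)).card := by
    rw [← Finset.card_univ]; exact h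
  rw [h2]
  refine Finset.sum_congr rfl (fun u hu => ?_)
  congr 1
  ext L
  simp only [mem_filter, mem_univ, true_and]
  rw [← mem_maxSet_iff U hU u hu L]

lemma maxSet_card_eq (U : Finset V) {u u' : V} (hu : u ∈ U) (hu' : u' ∈ U) :
    (maxSet U u).card = (maxSet U u').card := by
  classical
  refine Finset.card_bij' (fun L _ => (Equiv.swap u u').trans L)
    (fun L _ => (Equiv.swap u u').trans L) ?_ ?_ ?_ ?_
  · intro L hL
    rw [maxSet, mem_filter] at hL ⊢
    refine ⟨mem_univ _, fun w hw hne => ?_⟩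
    simp only [Equiv.trans_apply]
    rcases eq_or_ne w u with rfl | hwu
    · rw [Equiv.swap_apply_left, Equiv.swap_apply_right]
      exact hL.2 u' hu' (Ne.symm hne)
    · rw [Equiv.swap_apply_of_ne_of_ne hwu hne, Equiv.swap_apply_right]
      exact hL.2 w hw hwu
  · intro L hL
    rw [maxSet, mem_filter] at hL ⊢
    refine ⟨mem_univ _, fun w hw hne => ?_⟩
    simp only [Equiv.trans_apply]
    rcases eq_or_ne w u' with rfl | hwu'
    · rw [Equiv.swap_apply_right, Equiv.swap_apply_left]
      exact hL.2 u hu (Ne.symm hne)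
    · rw [Equiv.swap_apply_of_ne_of_ne hne hwu', Equiv.swap_apply_left]
      exact hL.2 w hw hwu'
  · intro L _; ext w; simp [Equiv.trans_apply, Equiv.swap_apply_self]
  · intro L _; ext w; simp [Equiv.trans_apply, Equiv.swap_apply_self]

lemma maxSet_card_mul (U : Finset V) {u : V} (hu : u ∈ U) :
    (maxSet U u).card * U.card = Fintype.card (V ≃ Fin (Fintype.card V)) := by
  classical
  rw [← sum_maxSet_card U ⟨u, hu⟩]
  rw [Finset.sum_congr rfl (fun u' hu' => maxSet_card_eq U hu' hu)]
  rw [Finset.sum_const, smul_eq_mul, mul_comm]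

variable {A : V → V → Prop}

lemma notmem_DLout_iff (hA : Irreflexive A) (v : V) (L : V ≃ Fin (Fintype.card V)) :
    v ∉ DLout A L ↔ (L ∈ maxSet (insert v (inN A v)) v ∨ L ∈ maxSet (insert v (outN A v)) v) := by
  have hmem : v ∈ DLout A L ↔ (∃ w ∈ inN A v, L v < L w) ∧ (∃ w ∈ outN A v, L v < L w) := by
    simp [DLout]
  have hmax : ∀ (U : Finset V), v ∉ U → (L ∈ maxSet (insert v U) v ↔ ¬ ∃ w ∈ U, L v < L w) := by
    intro U hvU
    rw [maxSet, mem_filter]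
    simp only [mem_univ, true_and, mem_insert]
    push_neg
    constructor
    · intro h w hw
      exact le_of_lt (h w (Or.inr hw) (fun he => hvU (he ▸ hw)))
    · intro h w hw hne
      rcases hw with rfl | hw
      · exact absurd rfl hne
      · exact lt_of_le_of_ne (h w hw) (fun he => hne (L.injective he))
  rw [hmax _ (by simp [inN, hA v]), hmax _ (by simp [outN, hA v]), hmem, not_and_or]

lemma inter_maxSet (hA : Irreflexive A) (v : V) :
    maxSet (insert v (inN A v)) v ∩ maxSet (insert v (outN A v)) v
      = maxSet (insert v (nbhd A v)) v := by
  ext L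
  simp only [mem_inter, maxSet, mem_filter, mem_univ, true_and, mem_insert, nbhd, mem_union]
  constructor
  · rintro ⟨h1, h2⟩ w hw hne
    rcases hw with rfl | (hw | hw)
    · exact absurd rfl hne
    · exact h2 w (Or.inr hw) hne
    · exact h1 w (Or.inr hw) hne
  · rintro h
    constructor <;> intro w hw hne <;> rcases hw with rfl | hw
    · exact absurd rfl hne
    · exact h w (Or.inr (Or.inr hw)) hne
    · exact absurd rfl hne
    · exact h w (Or.inr (Or.inl hw)) hne

lemma maxSet_card_real (U : Finset V) {u : V} (hu : u ∈ U) :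
    ((maxSet U u).card : ℝ) = (Fintype.card (V ≃ Fin (Fintype.card V)) : ℝ) / U.card := by
  have h := maxSet_card_mul U hu
  have hU : (0:ℝ) < (U.card : ℝ) := by
    exact_mod_cast Nat.pos_of_ne_zero (fun h0 => by simp [Finset.card_eq_zero.mp h0] at hu)
  field_simp
  exact_mod_cast h

lemma count_notmem (hA : Irreflexive A) (v : V) :
    ((univ.filter (fun L : V ≃ Fin (Fintype.card V) => v ∉ DLout A L)).card : ℝ)
      = (Fintype.card (V ≃ Fin (Fintype.card V)) : ℝ) * rho A v := by
  have hvin : v ∉ inN A v := by simp [inN, hA v]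
  have hvout : v ∉ outN A v := by simp [outN, hA v]
  have hvnb : v ∉ nbhd A v := by simp [nbhd, mem_union, hvin, hvout]
  have hfe : univ.filter (fun L : V ≃ Fin (Fintype.card V) => v ∉ DLout A L)
      = maxSet (insert v (inN A v)) v ∪ maxSet (insert v (outN A v)) v := by
    ext L
    simp only [mem_filter, mem_univ, true_and, mem_union]
    exact notmem_DLout_iff hA v L
  have hcards := Finset.card_union_add_card_inter (maxSet (insert v (inN A v)) v)
    (maxSet (insert v (outN A v)) v)
  rw [inter_maxSet hA v] at hcards
  have e1 := maxSet_card_real (insert v (inN A v)) (mem_insert_self v _)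
  have e2 := maxSet_card_real (insert v (outN A v)) (mem_insert_self v _)
  have e3 := maxSet_card_real (insert v (nbhd A v)) (mem_insert_self v _)
  rw [card_insert_of_notMem hvin] at e1
  rw [card_insert_of_notMem hvout] at e2
  rw [card_insert_of_notMem hvnb] at e3
  have hcr : ((maxSet (insert v (inN A v)) v ∪ maxSet (insert v (outN A v)) v).card : ℝ)
      = ((maxSet (insert v (inN A v)) v).card : ℝ) + ((maxSet (insert v (outN A v)) v).card : ℝ)
        - ((maxSet (insert v (nbhd A v)) v).card : ℝ) := by
    have := congrArg (fun x : ℕ => (x : ℝ)) hcards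
    push_cast at this ⊢
    linarith
  rw [hfe, hcr, e1, e2, e3, rho]
  push_cast
  ring

lemma sum_DLout_card (hA : Irreflexive A) :
    ∑ L : V ≃ Fin (Fintype.card V), ((DLout A L).card : ℝ)
      = (Fintype.card (V ≃ Fin (Fintype.card V)) : ℝ) *
        ((Fintype.card V : ℝ) - ∑ v : V, rho A v) := by
  have step : ∀ L : V ≃ Fin (Fintype.card V),
      (Fintype.card V : ℝ) - ((DLout A L).card : ℝ)
        = ∑ v : V, (if v ∉ DLout A L then (1:ℝ) else 0) := by
    intro L
    rw [Finset.sum_boole]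
    have h1 : univ.filter (fun v => v ∉ DLout A L) = univ \ DLout A L := by
      ext v; simp
    rw [h1, Finset.card_sdiff_of_subset (subset_univ _), Finset.card_univ,
      Nat.cast_sub (Finset.card_le_univ _)]
  have key : ∑ L : V ≃ Fin (Fintype.card V), ((Fintype.card V : ℝ) - ((DLout A L).card : ℝ))
      = (Fintype.card (V ≃ Fin (Fintype.card V)) : ℝ) * ∑ v : V, rho A v := by
    calc ∑ L : V ≃ Fin (Fintype.card V), ((Fintype.card V : ℝ) - ((DLout A L).card : ℝ))
        = ∑ L : V ≃ Fin (Fintype.card V), ∑ v : V, (if v ∉ DLout A L then (1:ℝ) else 0) :=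
          Finset.sum_congr rfl (fun L _ => step L)
      _ = ∑ v : V, ∑ L : V ≃ Fin (Fintype.card V), (if v ∉ DLout A L then (1:ℝ) else 0) :=
          Finset.sum_comm
      _ = ∑ v : V, ((univ.filter (fun L : V ≃ Fin (Fintype.card V) => v ∉ DLout A L)).card : ℝ) :=
          Finset.sum_congr rfl (fun v _ => by rw [Finset.sum_boole])
      _ = ∑ v : V, (Fintype.card (V ≃ Fin (Fintype.card V)) : ℝ) * rho A v :=
          Finset.sum_congr rfl (fun v _ => count_notmem hA v)
      _ = (Fintype.card (V ≃ Fin (Fintype.card V)) : ℝ) * ∑ v : V, rho A v := by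
          rw [Finset.mul_sum]
  have htot : ∑ L : V ≃ Fin (Fintype.card V),
      ((Fintype.card V : ℝ) - ((DLout A L).card : ℝ))
      = (Fintype.card (V ≃ Fin (Fintype.card V)) : ℝ) * (Fintype.card V : ℝ)
        - ∑ L : V ≃ Fin (Fintype.card V), ((DLout A L).card : ℝ) := by
    rw [Finset.sum_sub_distrib, Finset.sum_const, Finset.card_univ, nsmul_eq_mul]
  rw [htot] at key
  linarith

lemma acyclic_compl (hA : Irreflexive A) (L : V ≃ Fin (Fintype.card V)) :
    IsAcyclicOn A (univ \ DLout A L) := by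
  intro v hv
  set T := univ \ DLout A L with hT
  set r := fun x y => x ∈ T ∧ y ∈ T ∧ A x y with hr
  set C : Finset V := univ.filter (fun x => Relation.TransGen r v x ∧ Relation.TransGen r x v)
    with hC
  have hvC : v ∈ C := by simp [hC, hv]
  obtain ⟨u, huC, humin⟩ := Finset.exists_min_image C (fun x => L x) ⟨v, hvC⟩
  simp only [hC, mem_filter, mem_univ, true_and] at huC
  have huu : Relation.TransGen r u u := huC.2.trans huC.1
  obtain ⟨w, hw1, hw2⟩ := Relation.TransGen.head'_iff.mp huu
  obtain ⟨w', hw1', hw2'⟩ := Relation.TransGen.tail'_iff.mp huu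
  have hwC : w ∈ C := by
    simp only [hC, mem_filter, mem_univ, true_and]
    exact ⟨huC.1.tail hw1, Relation.TransGen.trans_right hw2 huC.2⟩
  have hw'C : w' ∈ C := by
    simp only [hC, mem_filter, mem_univ, true_and]
    exact ⟨Relation.TransGen.trans_left huC.1 hw1', (Relation.TransGen.single hw2').trans huC.2⟩
  have hwu : w ≠ u := fun he => hA u (he ▸ hw1.2.2)
  have hw'u : w' ≠ u := fun he => hA u (he ▸ hw2'.2.2)
  have hLw : L u < L w :=
    lt_of_le_of_ne (humin w hwC) (fun he => hwu (L.injective he.symm))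
  have hLw' : L u < L w' :=
    lt_of_le_of_ne (humin w' hw'C) (fun he => hw'u (L.injective he.symm))
  have huT : u ∈ T := hw1.1
  rw [hT, mem_sdiff] at huT
  apply huT.2
  rw [DLout, mem_filter]
  refine ⟨mem_univ _, ⟨w', ?_, hLw'⟩, ⟨w, ?_, hLw⟩⟩
  · rw [inN, mem_filter]; exact ⟨mem_univ _, hw2'.2.2⟩
  · rw [outN, mem_filter]; exact ⟨mem_univ _, hw1.2.2⟩

lemma card_compl_ge (hA : Irreflexive A) (G : SimpleGraph V)
    (hG : ∀ x y, G.Adj x y ↔ x ≠ y ∧ (A x y ∨ A y x)) [Fintype G.ConnectedComponent]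
    (L : V ≃ Fin (Fintype.card V)) :
    Fintype.card G.ConnectedComponent ≤ (univ \ DLout A L).card := by
  classical
  -- pick max-label vertex in each component
  have hne : ∀ K : G.ConnectedComponent,
      (univ.filter (fun x => G.connectedComponentMk x = K)).Nonempty := by
    intro K
    obtain ⟨x, hx⟩ := K.exists_rep
    exact ⟨x, by simp only [mem_filter, mem_univ, true_and]; exact hx⟩
  choose f hf using fun K : G.ConnectedComponent =>
    Finset.exists_max_image (univ.filter (fun x => G.connectedComponentMk x = K))
      (fun x => L x) (hne K)
  have hfK : ∀ K, G.connectedComponentMk (f K) = K := by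
    intro K
    have := (hf K).1
    simpa using this
  have hinj : Function.Injective f := by
    intro K K' h
    rw [← hfK K, ← hfK K', h]
  have hmem : ∀ K, f K ∈ univ \ DLout A L := by
    intro K
    simp only [mem_sdiff, mem_univ, true_and]
    intro hfDL
    rw [DLout, mem_filter] at hfDL
    obtain ⟨-, ⟨w, hw, hLw⟩, -⟩ := hfDL
    rw [inN, mem_filter] at hw
    have hadj : G.Adj (f K) w := by
      rw [hG]
      exact ⟨fun he => absurd hLw (by simp [he]), Or.inr hw.2⟩
    have hwK : G.connectedComponentMk w = K := by
      rw [← hfK K]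
      exact (SimpleGraph.ConnectedComponent.connectedComponentMk_eq_of_adj hadj.symm)
    have := (hf K).2 w (by simp [hwK])
    exact absurd hLw (not_lt.mpr this)
  calc Fintype.card G.ConnectedComponent = (univ.image f).card := by
        rw [Finset.card_image_of_injective _ hinj, Finset.card_univ]
      _ ≤ (univ \ DLout A L).card := Finset.card_le_card (by
        intro x hx
        rw [mem_image] at hx
        obtain ⟨K, -, rfl⟩ := hx
        exact hmem K)

end cnt

/-- Variance-based refinement of the AGJS bound via the Bhatia–Davis inequality. -/
theorem stmt_15 [Fintype V] (A : V → V → Prop) (hA : Irreflexive A)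
    (G : SimpleGraph V) (hG : ∀ x y, G.Adj x y ↔ x ≠ y ∧ (A x y ∨ A y x))
    [Fintype G.ConnectedComponent]
    (c : ℕ) (hc : c = Fintype.card G.ConnectedComponent)
    (hgt : (c : ℝ) < ∑ v : V, rho A v)
    (μ Var : ℝ)
    (hμ : μ = (∑ L : V ≃ Fin (Fintype.card V), ((DLout A L).card : ℝ)) /
      (Fintype.card (V ≃ Fin (Fintype.card V)) : ℝ))
    (hVar : Var = (∑ L : V ≃ Fin (Fintype.card V),
        (((DLout A L).card : ℝ) - μ) ^ 2) /
      (Fintype.card (V ≃ Fin (Fintype.card V)) : ℝ)) :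
    ∃ T : Finset V, IsAcyclicOn A T ∧
      (∑ v : V, rho A v) + Var / ((∑ v : V, rho A v) - (c : ℝ)) ≤ (T.card : ℝ) := by
  classical
  set ρS := ∑ v : V, rho A v with hρS
  set N := Fintype.card (V ≃ Fin (Fintype.card V)) with hN
  have hNpos : (0:ℝ) < (N : ℝ) := by
    have : 0 < N := @Fintype.card_pos _ _ ⟨Fintype.equivFin V⟩
    exact_mod_cast this
  obtain ⟨L₀, -, hmin⟩ := Finset.exists_min_image (univ : Finset (V ≃ Fin (Fintype.card V)))
    (fun L => (DLout A L).card) ⟨Fintype.equivFin V, mem_univ _⟩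
  set m := ((DLout A L₀).card : ℝ) with hm
  set M := ((Fintype.card V : ℝ) - (c : ℝ)) with hM
  have hμval : μ = (Fintype.card V : ℝ) - ρS := by
    rw [hμ, sum_DLout_card hA, ← hN]
    field_simp
    rfl
  have hXle : ∀ L : V ≃ Fin (Fintype.card V), ((DLout A L).card : ℝ) ≤ M := by
    intro L
    have h1 := card_compl_ge hA G hG L
    rw [Finset.card_sdiff_of_subset (subset_univ _), Finset.card_univ] at h1
    have h3 : (DLout A L).card + Fintype.card G.ConnectedComponent ≤ Fintype.card V := by
      have := Finset.card_le_univ (DLout A L)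
      omega
    rw [hM, hc]
    have h4 := (Nat.cast_le (α := ℝ)).mpr h3
    push_cast at h4
    linarith
  have hmle : ∀ L : V ≃ Fin (Fintype.card V), m ≤ ((DLout A L).card : ℝ) := by
    intro L
    have := hmin L (mem_univ L)
    rw [hm]
    exact_mod_cast this
  have hsum : ∑ L : V ≃ Fin (Fintype.card V), ((DLout A L).card : ℝ) = N * μ := by
    rw [hμ, mul_div_assoc']
    exact (mul_div_cancel_left₀ _ hNpos.ne').symm
  have hVarsum : ∑ L : V ≃ Fin (Fintype.card V), (((DLout A L).card : ℝ) - μ)^2 = N * Var := by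
    rw [hVar, mul_div_assoc']
    exact (mul_div_cancel_left₀ _ hNpos.ne').symm
  have hnonneg : (0:ℝ) ≤ ∑ L : V ≃ Fin (Fintype.card V),
      (M - ((DLout A L).card : ℝ)) * (((DLout A L).card : ℝ) - m) :=
    Finset.sum_nonneg (fun L _ => mul_nonneg (by linarith [hXle L]) (by linarith [hmle L]))
  have hid : (∑ L : V ≃ Fin (Fintype.card V), (((DLout A L).card : ℝ) - μ)^2)
      + (∑ L : V ≃ Fin (Fintype.card V),
          (M - ((DLout A L).card : ℝ)) * (((DLout A L).card : ℝ) - m))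
      = (N : ℝ) * ((M - μ) * (μ - m)) := by
    rw [← Finset.sum_add_distrib]
    have he : ∀ L : V ≃ Fin (Fintype.card V),
        (((DLout A L).card : ℝ) - μ)^2
          + (M - ((DLout A L).card : ℝ)) * (((DLout A L).card : ℝ) - m)
          = (M + m - 2*μ) * ((DLout A L).card : ℝ) + (μ^2 - M*m) := by
      intro L; ring
    rw [Finset.sum_congr rfl (fun L _ => he L), Finset.sum_add_distrib, ← Finset.mul_sum,
      hsum, Finset.sum_const, Finset.card_univ, ← hN, nsmul_eq_mul]
    ring
  have hBD : Var ≤ (M - μ) * (μ - m) := by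
    rw [hVarsum] at hid
    nlinarith [hNpos, hnonneg]
  have hMμ : M - μ = ρS - (c : ℝ) := by rw [hμval, hM]; ring
  have hpos : (0:ℝ) < ρS - (c : ℝ) := by linarith [hgt]
  refine ⟨univ \ DLout A L₀, acyclic_compl hA L₀, ?_⟩
  have hcard : ((univ \ DLout A L₀).card : ℝ) = (Fintype.card V : ℝ) - m := by
    rw [Finset.card_sdiff_of_subset (subset_univ _), Finset.card_univ,
      Nat.cast_sub (Finset.card_le_univ _)]
  rw [hcard]
  have hdiv : Var / (ρS - (c : ℝ)) ≤ μ - m := by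
    rw [div_le_iff₀ hpos]
    rw [hMμ] at hBD
    linarith
  linarith [hμval, hdiv]
end

section
/- Let D be a finite simple loopless digraph with c weakly connected components. Then Σ_{v∈V(D)} ρ_D(v) = c if and only if every weakly connected component of D is a complete symmetric digraph (an arc in both directions between every pair of distinct vertices of the component). -/
open Finset
open scoped Classical

variable {V : Type*}

private lemma one_div_inj' {x y : ℝ} (hx : 0 < x) (hy : 0 < y) (h : 1/x = 1/y) : x = y := by
  rw [div_eq_div_iff hx.ne' hy.ne'] at h
  linarith

/-- `Σ_v ρ_D(v) = c` iff every weakly connected component of `D` is a complete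
symmetric digraph. -/
theorem stmt_17 [Fintype V] (A : V → V → Prop) (hA : Irreflexive A)
    (G : SimpleGraph V) (hG : ∀ x y, G.Adj x y ↔ x ≠ y ∧ (A x y ∨ A y x))
    [Fintype G.ConnectedComponent] :
    (∑ v : V, rho A v) = (Fintype.card G.ConnectedComponent : ℝ) ↔
      ∀ x y : V, x ≠ y → G.Reachable x y → A x y ∧ A y x := by
  classical
  set K : G.ConnectedComponent → Finset V :=
    fun cc => univ.filter (fun v => G.connectedComponentMk v = cc) with hK
  set n : V → ℕ := fun v => (K (G.connectedComponentMk v)).card with hn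
  have hvK : ∀ v, v ∈ K (G.connectedComponentMk v) := by
    intro v; exact mem_filter.2 ⟨mem_univ v, rfl⟩
  have hnpos : ∀ v, 0 < n v := fun v => card_pos.2 ⟨v, hvK v⟩
  -- nbhd is inside the component minus the vertex
  have hsub : ∀ v, nbhd A v ⊆ (K (G.connectedComponentMk v)).erase v := by
    intro v w hw
    have hmem : A v w ∨ A w v := by
      simpa [nbhd, outN, inN, or_comm] using hw
    have hne : w ≠ v := by
      rintro rfl
      rcases hmem with h | h <;> exact hA w h
    have hadj : G.Adj v w := (hG v w).2 ⟨Ne.symm hne, hmem⟩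
    refine Finset.mem_erase.2 ⟨hne, ?_⟩
    simp only [hK, mem_filter, mem_univ, true_and]
    exact SimpleGraph.ConnectedComponent.sound hadj.symm.reachable
  have hdn : ∀ v, (nbhd A v).card + 1 ≤ n v := by
    intro v
    have h1 := Finset.card_le_card (hsub v)
    rw [Finset.card_erase_of_mem (hvK v)] at h1
    have h2 := hnpos v
    have h3 : n v = (K (G.connectedComponentMk v)).card := rfl
    omega
  have houtsub : ∀ v, outN A v ⊆ nbhd A v := fun v => Finset.subset_union_left
  have hinsub : ∀ v, inN A v ⊆ nbhd A v := fun v => Finset.subset_union_right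
  -- sum of 1/n over all vertices equals number of components
  have hinner : ∀ cc : G.ConnectedComponent, (∑ v ∈ K cc, (1 : ℝ) / (n v)) = 1 := by
    intro cc
    obtain ⟨w, rfl⟩ := Quot.exists_rep cc
    show (∑ v ∈ K (G.connectedComponentMk w), (1 : ℝ) / (n v)) = 1
    have hcg : ∀ v ∈ K (G.connectedComponentMk w),
        (1:ℝ)/(n v) = 1/((K (G.connectedComponentMk w)).card : ℝ) := by
      intro v hv
      have hv' : G.connectedComponentMk v = G.connectedComponentMk w :=
        (mem_filter.1 hv).2
      simp [hn, hv']
    rw [Finset.sum_congr rfl hcg, Finset.sum_const, nsmul_eq_mul]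
    have hpos : (0:ℝ) < ((K (G.connectedComponentMk w)).card : ℝ) := by
      exact_mod_cast hnpos w
    field_simp
  have hsum1 : (∑ v : V, (1 : ℝ) / (n v)) = (Fintype.card G.ConnectedComponent : ℝ) := by
    calc (∑ v : V, (1 : ℝ) / (n v))
        = ∑ cc : G.ConnectedComponent, ∑ v ∈ K cc, (1 : ℝ) / (n v) :=
          (Finset.sum_fiberwise univ (fun v => G.connectedComponentMk v)
            (fun v => (1:ℝ)/(n v))).symm
      _ = ∑ _cc : G.ConnectedComponent, (1:ℝ) := Finset.sum_congr rfl (fun cc _ => hinner cc)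
      _ = (Fintype.card G.ConnectedComponent : ℝ) := by simp
  -- per-vertex gap nonneg, with equality characterization
  have hgap : ∀ v, (1:ℝ)/(n v) ≤ rho A v := by
    intro v
    have ha : ((outN A v).card : ℝ) ≤ ((nbhd A v).card : ℝ) := by
      exact_mod_cast Finset.card_le_card (houtsub v)
    have hb : ((inN A v).card : ℝ) ≤ ((nbhd A v).card : ℝ) := by
      exact_mod_cast Finset.card_le_card (hinsub v)
    have hdnn : (1 : ℝ) + ((nbhd A v).card : ℝ) ≤ (n v : ℝ) := by
      have h := hdn v
      have : ((nbhd A v).card : ℝ) + 1 ≤ (n v : ℝ) := by exact_mod_cast h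
      linarith
    have h1 : (1:ℝ)/(1 + ((nbhd A v).card : ℝ)) ≤ 1/(1 + ((outN A v).card : ℝ)) :=
      one_div_le_one_div_of_le (by positivity) (by linarith)
    have h2 : (1:ℝ)/(1 + ((nbhd A v).card : ℝ)) ≤ 1/(1 + ((inN A v).card : ℝ)) :=
      one_div_le_one_div_of_le (by positivity) (by linarith)
    have h3 : (1:ℝ)/(n v) ≤ 1/(1 + ((nbhd A v).card : ℝ)) :=
      one_div_le_one_div_of_le (by positivity) hdnn
    unfold rho
    linarith
  -- key characterization of the sum equality
  have key : (∑ v : V, rho A v) = (Fintype.card G.ConnectedComponent : ℝ) ↔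
      ∀ v : V, (outN A v).card = (nbhd A v).card ∧ (inN A v).card = (nbhd A v).card ∧
        (nbhd A v).card + 1 = n v := by
    rw [← hsum1]
    constructor
    · intro hEq v
      have hzero : (∑ v : V, (rho A v - 1/(n v))) = 0 := by
        rw [Finset.sum_sub_distrib, hEq]; ring
      have hall := (Finset.sum_eq_zero_iff_of_nonneg
        (fun i _ => sub_nonneg.2 (hgap i))).1 hzero v (mem_univ v)
      have hveq : rho A v = 1/(n v) := by linarith [sub_eq_zero.1 hall]
      -- unpack equality into the three conditions
      have ha : ((outN A v).card : ℝ) ≤ ((nbhd A v).card : ℝ) := by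
        exact_mod_cast Finset.card_le_card (houtsub v)
      have hb : ((inN A v).card : ℝ) ≤ ((nbhd A v).card : ℝ) := by
        exact_mod_cast Finset.card_le_card (hinsub v)
      have hdnn : (1 : ℝ) + ((nbhd A v).card : ℝ) ≤ (n v : ℝ) := by
        have h := hdn v
        have : ((nbhd A v).card : ℝ) + 1 ≤ (n v : ℝ) := by exact_mod_cast h
        linarith
      have h1 : (1:ℝ)/(1 + ((nbhd A v).card : ℝ)) ≤ 1/(1 + ((outN A v).card : ℝ)) :=
        one_div_le_one_div_of_le (by positivity) (by linarith)
      have h2 : (1:ℝ)/(1 + ((nbhd A v).card : ℝ)) ≤ 1/(1 + ((inN A v).card : ℝ)) :=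
        one_div_le_one_div_of_le (by positivity) (by linarith)
      have h3 : (1:ℝ)/(n v) ≤ 1/(1 + ((nbhd A v).card : ℝ)) :=
        one_div_le_one_div_of_le (by positivity) hdnn
      unfold rho at hveq
      have e1 : (1:ℝ)/(1 + ((outN A v).card : ℝ)) = 1/(1 + ((nbhd A v).card : ℝ)) := by
        linarith
      have e2 : (1:ℝ)/(1 + ((inN A v).card : ℝ)) = 1/(1 + ((nbhd A v).card : ℝ)) := by
        linarith
      have e3 : (1:ℝ)/(n v) = 1/(1 + ((nbhd A v).card : ℝ)) := by linarith
      have hp1 : (0:ℝ) < 1 + ((outN A v).card : ℝ) := by positivity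
      have hp2 : (0:ℝ) < 1 + ((inN A v).card : ℝ) := by positivity
      have hp3 : (0:ℝ) < 1 + ((nbhd A v).card : ℝ) := by positivity
      have hp4 : (0:ℝ) < (n v : ℝ) := by exact_mod_cast hnpos v
      have c1 : (1:ℝ) + ((outN A v).card : ℝ) = 1 + ((nbhd A v).card : ℝ) :=
        one_div_inj' hp1 hp3 e1
      have c2 : (1:ℝ) + ((inN A v).card : ℝ) = 1 + ((nbhd A v).card : ℝ) :=
        one_div_inj' hp2 hp3 e2
      have c3 : ((n v : ℝ)) = 1 + ((nbhd A v).card : ℝ) := one_div_inj' hp4 hp3 e3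
      refine ⟨?_, ?_, ?_⟩
      · have : ((outN A v).card : ℝ) = ((nbhd A v).card : ℝ) := by linarith
        exact_mod_cast this
      · have : ((inN A v).card : ℝ) = ((nbhd A v).card : ℝ) := by linarith
        exact_mod_cast this
      · have : (((nbhd A v).card + 1 : ℕ) : ℝ) = (n v : ℝ) := by push_cast; linarith
        exact_mod_cast this
    · intro h
      refine Finset.sum_congr rfl ?_
      intro v _
      obtain ⟨h1, h2, h3⟩ := h v
      unfold rho
      rw [h1, h2, show ((n v : ℝ)) = 1 + ((nbhd A v).card : ℝ) by
        rw [← h3]; push_cast; ring]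
      ring
  rw [key]
  constructor
  · intro h x y hxy hreach
    obtain ⟨h1, h2, h3⟩ := h x
    -- nbhd A x = erase, outN = nbhd, inN = nbhd
    have hne : nbhd A x = (K (G.connectedComponentMk x)).erase x := by
      apply Finset.eq_of_subset_of_card_le (hsub x)
      rw [Finset.card_erase_of_mem (hvK x)]
      have hnx : n x = (K (G.connectedComponentMk x)).card := rfl
      omega
    have hout : outN A x = nbhd A x :=
      Finset.eq_of_subset_of_card_le (houtsub x) (le_of_eq h1.symm)
    have hin : inN A x = nbhd A x :=
      Finset.eq_of_subset_of_card_le (hinsub x) (le_of_eq h2.symm)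
    have hy : y ∈ nbhd A x := by
      rw [hne, Finset.mem_erase]
      refine ⟨hxy.symm, ?_⟩
      simp only [hK, mem_filter, mem_univ, true_and]
      exact SimpleGraph.ConnectedComponent.sound hreach.symm
    constructor
    · have : y ∈ outN A x := hout ▸ hy
      simpa [outN] using this
    · have : y ∈ inN A x := hin ▸ hy
      simpa [inN] using this
  · intro h v
    have hEsub : (K (G.connectedComponentMk v)).erase v ⊆ outN A v ∩ inN A v := by
      intro w hw
      obtain ⟨hwne, hwK⟩ := Finset.mem_erase.1 hw
      have hreach : G.Reachable v w := by
        refine SimpleGraph.ConnectedComponent.eq.1 ?_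
        have : G.connectedComponentMk w = G.connectedComponentMk v := by
          simpa [hK] using hwK
        exact this.symm
      obtain ⟨h1, h2⟩ := h v w (Ne.symm hwne) hreach
      simp [outN, inN, h1, h2]
    have hEq : outN A v = (K (G.connectedComponentMk v)).erase v ∧
        inN A v = (K (G.connectedComponentMk v)).erase v ∧
        nbhd A v = (K (G.connectedComponentMk v)).erase v := by
      have ho : (K (G.connectedComponentMk v)).erase v ⊆ outN A v :=
        hEsub.trans Finset.inter_subset_left
      have hi : (K (G.connectedComponentMk v)).erase v ⊆ inN A v :=
        hEsub.trans Finset.inter_subset_right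
      have hnb : nbhd A v = (K (G.connectedComponentMk v)).erase v :=
        Finset.Subset.antisymm (hsub v) (ho.trans (houtsub v))
      refine ⟨Finset.Subset.antisymm (fun w hw => hnb ▸ houtsub v hw) ho,
              Finset.Subset.antisymm (fun w hw => hnb ▸ hinsub v hw) hi, hnb⟩
    obtain ⟨e1, e2, e3⟩ := hEq
    rw [e1, e2, e3, Finset.card_erase_of_mem (hvK v)]
    have h1 := hnpos v
    have h2 : n v = (K (G.connectedComponentMk v)).card := rfl
    refine ⟨rfl, rfl, by omega⟩
end

section
/- For any finite simple loopless digraph D with c weakly connected components, Σ_{v∈V(D)} ρ_D(v) ≥ c, where ρ_D(v) = 1/(1+d_v⁺) + 1/(1+d_v⁻) − 1/(1+d_v). -/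
open Finset
open scoped Classical

variable {V : Type*}

/-- `ρ_D(v) ≥ 1/(1+d_v)` since `d⁺ ≤ d` and `d⁻ ≤ d`. -/
lemma rho_ge [Fintype V] (A : V → V → Prop) (v : V) :
    1 / (1 + ((nbhd A v).card : ℝ)) ≤ rho A v := by
  have hc1 : ((outN A v).card : ℝ) ≤ ((nbhd A v).card : ℝ) := by
    exact_mod_cast Finset.card_le_card Finset.subset_union_left
  have hc2 : ((inN A v).card : ℝ) ≤ ((nbhd A v).card : ℝ) := by
    exact_mod_cast Finset.card_le_card Finset.subset_union_right
  have p1 : (0 : ℝ) < 1 + ((outN A v).card : ℝ) := by positivity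
  have p2 : (0 : ℝ) < 1 + ((inN A v).card : ℝ) := by positivity
  have h1 : 1 / (1 + ((nbhd A v).card : ℝ)) ≤ 1 / (1 + ((outN A v).card : ℝ)) :=
    one_div_le_one_div_of_le p1 (by linarith)
  have h2 : 1 / (1 + ((nbhd A v).card : ℝ)) ≤ 1 / (1 + ((inN A v).card : ℝ)) :=
    one_div_le_one_div_of_le p2 (by linarith)
  unfold rho
  linarith

/-- `Σ_v ρ_D(v) ≥ c`, the number of weakly connected components. -/
theorem stmt_18 [Fintype V] (A : V → V → Prop) (hA : Irreflexive A)
    (G : SimpleGraph V) (hG : ∀ x y, G.Adj x y ↔ x ≠ y ∧ (A x y ∨ A y x))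
    [Fintype G.ConnectedComponent] :
    (Fintype.card G.ConnectedComponent : ℝ) ≤ ∑ v : V, rho A v := by
  classical
  set f : V → G.ConnectedComponent := G.connectedComponentMk with hf
  have key : ∀ v : V, 1 / (1 + ((nbhd A v).card : ℝ)) ≤ rho A v := rho_ge A
  -- group the sum by connected components
  have hsum :
      ∑ v : V, (1 / (1 + ((nbhd A v).card : ℝ)))
        = ∑ c : G.ConnectedComponent,
            ∑ v ∈ Finset.univ.filter (fun v => f v = c),
              (1 / (1 + ((nbhd A v).card : ℝ))) := by
    exact (Finset.sum_fiberwise Finset.univ f (fun v => 1 / (1 + ((nbhd A v).card : ℝ)))).symm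
  have hcomp : ∀ c : G.ConnectedComponent,
      (1 : ℝ) ≤ ∑ v ∈ Finset.univ.filter (fun v => f v = c),
          (1 / (1 + ((nbhd A v).card : ℝ))) := by
    intro c
    set T : Finset V := Finset.univ.filter (fun v => f v = c) with hT
    obtain ⟨x, hx⟩ := c.exists_rep
    have hxT : x ∈ T := by simp only [hT, Finset.mem_filter, Finset.mem_univ, true_and]; exact hx
    have hTne : T.Nonempty := ⟨x, hxT⟩
    have hk : 0 < T.card := Finset.card_pos.mpr hTne
    -- each vertex's neighborhood lies in its component, minus itself
    have hsub : ∀ v ∈ T, nbhd A v ⊆ T.erase v := by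
      intro v hv w hw
      rw [nbhd] at hw
      have hadj : G.Adj v w := by
        rcases Finset.mem_union.mp hw with h | h
        · have := (Finset.mem_filter.mp h).2
          exact (hG v w).mpr ⟨fun e => hA v (e ▸ this), Or.inl this⟩
        · have := (Finset.mem_filter.mp h).2
          exact (hG v w).mpr ⟨fun e => hA v (e ▸ this), Or.inr this⟩
      refine Finset.mem_erase.mpr ⟨(hadj.ne).symm, ?_⟩
      have hvw : f w = f v := (SimpleGraph.ConnectedComponent.sound hadj.reachable).symm
      have : f v = c := (Finset.mem_filter.mp hv).2
      simp [hT, hvw, this]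
    have hdeg : ∀ v ∈ T, ((nbhd A v).card : ℝ) + 1 ≤ (T.card : ℝ) := by
      intro v hv
      have h1 : (nbhd A v).card ≤ (T.erase v).card := Finset.card_le_card (hsub v hv)
      have h2 : (T.erase v).card = T.card - 1 := Finset.card_erase_of_mem (by simpa [hT] using hv)
      have : (nbhd A v).card + 1 ≤ T.card := by omega
      exact_mod_cast this
    have hbound : ∀ v ∈ T, (1 / (T.card : ℝ)) ≤ 1 / (1 + ((nbhd A v).card : ℝ)) := by
      intro v hv
      apply one_div_le_one_div_of_le (by positivity)
      have := hdeg v hv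
      linarith
    calc (1 : ℝ) = T.card * (1 / (T.card : ℝ)) := by
          field_simp
      _ = ∑ _v ∈ T, (1 / (T.card : ℝ)) := by
          rw [Finset.sum_const, nsmul_eq_mul]
      _ ≤ ∑ v ∈ T, (1 / (1 + ((nbhd A v).card : ℝ))) := Finset.sum_le_sum hbound
  calc (Fintype.card G.ConnectedComponent : ℝ)
      = ∑ _c : G.ConnectedComponent, (1 : ℝ) := by simp
    _ ≤ ∑ c : G.ConnectedComponent,
          ∑ v ∈ Finset.univ.filter (fun v => f v = c),
            (1 / (1 + ((nbhd A v).card : ℝ))) := Finset.sum_le_sum (fun c _ => hcomp c)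
    _ = ∑ v : V, (1 / (1 + ((nbhd A v).card : ℝ))) := hsum.symm
    _ ≤ ∑ v : V, rho A v := Finset.sum_le_sum (fun v _ => key v)
end
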